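/- arXiv:hep-th/0603138 — 8 statements merged into one kernel-verified Lean document; each statement's English description precedes it below -/
import Mathlib

section
/- Let x be a 2×2 matrix with entries in A. Then x satisfies the M_q(2) relations if and only if x·x̄ = x̄·x = det_q(x)·I₂, where I₂ is the 2×2 identity matrix (i.e. the defining commutation relations of a q-quaternion are equivalent to the single matrix identity x x̄ = x̄ x = |x|² I₂). -/
open Matrix

variable {R : Type*} [CommRing R] {A : Type*} [Ring A] [Algebra R A]

/-- The defining commutation relations of `M_q(2)` for a 2×2 matrix `x`
(with `qi` playing the role of `q⁻¹`). -/
def MqRel (q qi : R) (x : Matrix (Fin 2) (Fin 2) A) : Prop :=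
  x 0 0 * x 0 1 = q • (x 0 1 * x 0 0) ∧
  x 0 0 * x 1 0 = q • (x 1 0 * x 0 0) ∧
  x 0 1 * x 1 1 = q • (x 1 1 * x 0 1) ∧
  x 1 0 * x 1 1 = q • (x 1 1 * x 1 0) ∧
  x 0 1 * x 1 0 = x 1 0 * x 0 1 ∧
  x 0 0 * x 1 1 - x 1 1 * x 0 0 = (q - qi) • (x 0 1 * x 1 0)

/-- The q-determinant `det_q(x) = x¹¹x²² − q x¹²x²¹`. -/
def qdet (q : R) (x : Matrix (Fin 2) (Fin 2) A) : A :=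
  x 0 0 * x 1 1 - q • (x 0 1 * x 1 0)

/-- The conjugate matrix `x̄ = [[x²², −q⁻¹x¹²],[−qx²¹, x¹¹]]`. -/
def qconj (q qi : R) (x : Matrix (Fin 2) (Fin 2) A) : Matrix (Fin 2) (Fin 2) A :=
  !![x 1 1, -(qi • x 0 1); -(q • x 1 0), x 0 0]

lemma smul_cancel_aux (q qi : R) (hq : q * qi = 1) {u v : A}
    (h : qi • u = v) : u = q • v := by
  rw [← h, smul_smul, hq, one_smul]

lemma smul_cancel_aux' (q qi : R) (hq : q * qi = 1) {u v : A}
    (h : q • u = q • v) : u = v := by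
  have : qi • (q • u) = qi • (q • v) := by rw [h]
  rwa [smul_smul, smul_smul, mul_comm qi q, hq, one_smul, one_smul] at this

/-- a 2×2 matrix `x` satisfies the `M_q(2)` relations iff
`x x̄ = x̄ x = det_q(x) · I₂`. -/
theorem mqRel_iff_mul_qconj (q qi : R) (hq : q * qi = 1)
    (x : Matrix (Fin 2) (Fin 2) A) :
    MqRel q qi x ↔
      (x * qconj q qi x = qdet q x • (1 : Matrix (Fin 2) (Fin 2) A) ∧
       qconj q qi x * x = qdet q x • (1 : Matrix (Fin 2) (Fin 2) A)) := by
  constructor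
  · rintro ⟨h1, h2, h3, h4, h5, h6⟩
    rw [sub_smul, sub_eq_iff_eq_add] at h6
    constructor
    · ext i j
      fin_cases i <;> fin_cases j <;>
        simp [qconj, qdet, Matrix.mul_apply, Fin.sum_univ_two, mul_smul_comm,
          smul_mul_assoc]
      · abel
      · rw [h1, smul_smul, mul_comm qi q, hq, one_smul]; abel
      · rw [h4]; abel
      · rw [← h5, h6]; abel
    · ext i j
      fin_cases i <;> fin_cases j <;>
        simp [qconj, qdet, Matrix.mul_apply, Fin.sum_univ_two, mul_smul_comm,
          smul_mul_assoc]
      · rw [h6]; abel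
      · rw [h3, smul_smul, mul_comm qi q, hq, one_smul]; abel
      · rw [h2]; abel
      · rw [h5]; abel
  · rintro ⟨hx, hy⟩
    have e01 := congrFun (congrFun hx 0) 1
    have e10 := congrFun (congrFun hx 1) 0
    have e11 := congrFun (congrFun hx 1) 1
    have f01 := congrFun (congrFun hy 0) 1
    have f10 := congrFun (congrFun hy 1) 0
    have f11 := congrFun (congrFun hy 1) 1
    simp [qconj, qdet, Matrix.mul_apply, Fin.sum_univ_two, mul_smul_comm,
      smul_mul_assoc] at e01 e10 e11 f01 f10 f11
    have r1 : x 0 0 * x 0 1 = q • (x 0 1 * x 0 0) :=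
      smul_cancel_aux q qi hq (neg_add_eq_zero.mp e01)
    have r4 : x 1 0 * x 1 1 = q • (x 1 1 * x 1 0) := add_neg_eq_zero.mp e10
    have r3 : x 0 1 * x 1 1 = q • (x 1 1 * x 0 1) :=
      smul_cancel_aux q qi hq (add_neg_eq_zero.mp f01).symm
    have r2 : x 0 0 * x 1 0 = q • (x 1 0 * x 0 0) := (neg_add_eq_zero.mp f10).symm
    have r5 : x 0 1 * x 1 0 = x 1 0 * x 0 1 := by
      have h : -(q • (x 1 0 * x 0 1)) = -(q • (x 0 1 * x 1 0)) := by
        rw [sub_eq_neg_add] at f11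
        exact add_right_cancel f11
      exact (smul_cancel_aux' q qi hq (neg_injective h)).symm
    have r6 : x 0 0 * x 1 1 - x 1 1 * x 0 0 = (q - qi) • (x 0 1 * x 1 0) := by
      rw [r5] at e11
      rw [eq_sub_iff_add_eq] at e11
      rw [sub_smul, r5, ← e11]
      abel
    exact ⟨r1, r2, r3, r4, r5, r6⟩
end

section
/- Let a, b, x, ξ be 2×2 matrices with entries in A such that: b satisfies the M_q(2) relations; the entries of a, of b, and of x mutually commute (entries from different matrices commute); and every entry of ξ commutes with every entry of a and of b. Then \overline{a x b} = b̄ x̄ ā, and consequently (a ξ b)·(\overline{a x b}) = det_q(b) · a (ξ x̄) ā. (This is the transformation law Δ_L(ξ x̄) = |c|² a (ξ x̄) a⁻¹ of the instanton building block under the quantum group of rotations and scale transformations.) -/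
open Matrix

variable {R : Type*} [CommRing R] {A : Type*} [Ring A] [Algebra R A]

/-- `conj(a x b) = b̄ x̄ ā` and the transformation law
`(a ξ b)(conj(a x b)) = det_q(b) · a (ξ x̄) ā` of the instanton building block
under the quantum group of rotations and scale transformations. -/
theorem qconj_triple_mul (q qi : R) (hq : q * qi = 1)
    (a b x ξ : Matrix (Fin 2) (Fin 2) A)
    (hb : MqRel q qi b)
    (hab : ∀ i j k l : Fin 2, a i j * b k l = b k l * a i j)
    (hax : ∀ i j k l : Fin 2, a i j * x k l = x k l * a i j)
    (hbx : ∀ i j k l : Fin 2, b i j * x k l = x k l * b i j)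
    (hξa : ∀ i j k l : Fin 2, ξ i j * a k l = a k l * ξ i j)
    (hξb : ∀ i j k l : Fin 2, ξ i j * b k l = b k l * ξ i j) :
    qconj q qi (a * x * b) = qconj q qi b * qconj q qi x * qconj q qi a ∧
    (a * ξ * b) * qconj q qi (a * x * b)
      = qdet q b • (a * (ξ * qconj q qi x) * qconj q qi a) := by
  have hiq : qi * q = 1 := by rw [mul_comm]; exact hq
  -- Part 1: conj(a x b) = b̄ x̄ ā
  have hre : ∀ i j k l m n : Fin 2, b i j * (x k l * a m n) = a m n * (x k l * b i j) := by
    intro i j k l m n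
    rw [← mul_assoc, hbx, mul_assoc, ← hab, ← mul_assoc, ← hax, mul_assoc]
  have h1 : ∀ u : A, q • qi • u = u := by
    intro u; rw [smul_smul, hq, one_smul]
  have h2 : ∀ u : A, qi • q • u = u := by
    intro u; rw [smul_smul, hiq, one_smul]
  have part1 : qconj q qi (a * x * b) = qconj q qi b * qconj q qi x * qconj q qi a := by
    ext i j
    fin_cases i <;> fin_cases j <;>
      simp [qconj, Matrix.mul_apply, Fin.sum_univ_two, add_mul, mul_add, smul_mul_assoc,
        mul_smul_comm, mul_assoc, hre, h1, h2, smul_add, smul_sub] <;>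
      abel
  refine ⟨part1, ?_⟩
  -- b * b̄ = det_q(b) • 1
  have key : b * qconj q qi b = qdet q b • (1 : Matrix (Fin 2) (Fin 2) A) := by
    obtain ⟨hb1, hb2, hb3, hb4, hb5, hb6⟩ := hb
    ext i j
    fin_cases i <;> fin_cases j <;>
      simp [qconj, qdet, Matrix.mul_apply, Fin.sum_univ_two, Matrix.one_apply, mul_neg,
        mul_smul_comm, smul_smul]
    · abel
    · rw [hb1, smul_smul, hiq, one_smul, neg_add_cancel]
    · rw [hb4]; abel
    · rw [← hb5]
      have : b 1 1 * b 0 0 = b 0 0 * b 1 1 - (q - qi) • (b 0 1 * b 1 0) := by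
        rw [← hb6]; abel
      rw [this, sub_smul]
      abel
  -- the scalar det_q(b) commutes with entries of a and ξ
  have cab : ∀ i j : Fin 2, Commute (a i j) (qdet q b) := fun i j =>
    ((Commute.mul_right (hab i j 0 0) (hab i j 1 1)).sub_right
      ((Commute.mul_right (hab i j 0 1) (hab i j 1 0)).smul_right q))
  have cξb : ∀ i j : Fin 2, Commute (ξ i j) (qdet q b) := fun i j =>
    ((Commute.mul_right (hξb i j 0 0) (hξb i j 1 1)).sub_right
      ((Commute.mul_right (hξb i j 0 1) (hξb i j 1 0)).smul_right q))
  have hmid : (a * ξ) * (qdet q b • (1 : Matrix (Fin 2) (Fin 2) A))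
      = qdet q b • (a * ξ) := by
    have hc : ∀ i k l : Fin 2, a i k * ξ k l * qdet q b = qdet q b * (a i k * ξ k l) :=
      fun i k l => (Commute.mul_left (cab i k) (cξb k l)).eq
    ext i j
    simp only [Matrix.mul_apply, Matrix.smul_apply, Matrix.one_apply, smul_eq_mul,
      Fin.sum_univ_two, mul_ite, mul_one, mul_zero, Fin.isValue]
    fin_cases j <;>
      simp only [Fin.isValue, Fin.zero_eta, Fin.mk_one, if_true, if_false,
        Fin.one_eq_zero_iff, Fin.zero_eq_one_iff, ne_eq, OfNat.ofNat_ne_one,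
        not_false_eq_true, ite_true, ite_false, add_zero, zero_add,
        show (0 : Fin 2) ≠ 1 by decide, show (1 : Fin 2) ≠ 0 by decide] <;>
      rw [add_mul, hc, hc, mul_add]
  calc (a * ξ * b) * qconj q qi (a * x * b)
      = (a * ξ) * ((b * qconj q qi b) * (qconj q qi x * qconj q qi a)) := by
        rw [part1]; simp only [mul_assoc]
    _ = ((a * ξ) * (qdet q b • (1 : Matrix (Fin 2) (Fin 2) A)))
          * (qconj q qi x * qconj q qi a) := by
        rw [key]; simp only [mul_assoc, Matrix.smul_mul, Matrix.one_mul]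
    _ = (qdet q b • (a * ξ)) * (qconj q qi x * qconj q qi a) := by rw [hmid]
    _ = qdet q b • (a * (ξ * qconj q qi x) * qconj q qi a) := by
        rw [Matrix.smul_mul]; simp only [mul_assoc]
end

section
/- Let A be a unital *-algebra over ℝ and q a nonzero real number. Let α, γ ∈ A satisfy the q-quaternion relations: αγ = qγα, αγ* = qγ*α, γα* = qα*γ, γ*α* = qα*γ*, αα* − α*α = (1 − q²)γγ*, γ*γ = γγ*. Set |x|² := α*α + γ*γ. Suppose u ∈ A is self-adjoint, commutes with α, γ, α*, γ*, and satisfies u·(1 + 2|x|²) = (1 + 2|x|²)·u = 1. Define α' := 2√2 · α* u, β' := 2√2 · γ* u, and z := (1 − 2|x|²)·u. Then z is self-adjoint and α'(α')* + β'(β')* + z² = 1 (the stereographically projected generators satisfy the defining sphere relation of the quantum 4-sphere S⁴_q). -/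
/-- the stereographically projected generators
`α' = 2√2 α* u`, `β' = 2√2 γ* u`, `z = (1 − 2|x|²) u` (with
`u = (1 + 2|x|²)⁻¹` and `|x|² = α*α + γ*γ`) satisfy `z* = z` and the defining
sphere relation `α'(α')* + β'(β')* + z² = 1` of the quantum 4-sphere. -/
theorem sphere_relation {A : Type*} [Ring A] [Algebra ℝ A] [StarRing A] [StarModule ℝ A]
    (q : ℝ) (hq : q ≠ 0) (a g : A)
    (h1 : a * g = q • (g * a))
    (h2 : a * star g = q • (star g * a))
    (h3 : g * star a = q • (star a * g))
    (h4 : star g * star a = q • (star a * star g))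
    (h5 : a * star a - star a * a = (1 - q ^ 2) • (g * star g))
    (h6 : star g * g = g * star g)
    (u : A) (hu : star u = u)
    (hua : u * a = a * u) (hug : u * g = g * u)
    (hua' : u * star a = star a * u) (hug' : u * star g = star g * u)
    (huX : u * (1 + 2 * (star a * a + star g * g)) = 1)
    (hXu : (1 + 2 * (star a * a + star g * g)) * u = 1) :
    star ((1 - 2 * (star a * a + star g * g)) * u)
        = (1 - 2 * (star a * a + star g * g)) * u ∧
    ((2 * Real.sqrt 2) • (star a * u)) * star ((2 * Real.sqrt 2) • (star a * u)) +
      ((2 * Real.sqrt 2) • (star g * u)) * star ((2 * Real.sqrt 2) • (star g * u)) +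
      ((1 - 2 * (star a * a + star g * g)) * u) *
        ((1 - 2 * (star a * a + star g * g)) * u) = 1 := by
  set X := star a * a + star g * g with hX
  have hXstar : star X = X := by simp [hX, star_mul]
  have t1 : u * (star a * a) = star a * a * u := by
    rw [← mul_assoc, hua', mul_assoc, hua, mul_assoc]
  have t2 : u * (star g * g) = star g * g * u := by
    rw [← mul_assoc, hug', mul_assoc, hug, mul_assoc]
  have hcomm : u * X = X * u := by rw [hX, mul_add, add_mul, t1, t2]
  have hcomm2 : u * (2 * X) = (2 * X) * u := by
    rw [two_mul, mul_add, add_mul, hcomm]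
  have hzcomm : u * (1 - 2 * X) = (1 - 2 * X) * u := by
    rw [mul_sub, sub_mul, mul_one, one_mul, hcomm2]
  have hsa : star ((1 - 2 * X) * u) = (1 - 2 * X) * u := by
    simp only [star_mul, hu, star_sub, star_one, star_ofNat, hXstar]
    rw [mul_two X, ← two_mul X]
    exact hzcomm
  have z2 : ((1 - 2*X) * u) * ((1 - 2*X) * u) = u * ((1 - 2*X) * (1 - 2*X)) * u := by
    nth_rewrite 1 [← hzcomm]
    noncomm_ring
  refine ⟨hsa, ?_⟩
  have h8 : (2 * Real.sqrt 2) * (2 * Real.sqrt 2) = (8:ℝ) := by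
    have := Real.mul_self_sqrt (by norm_num : (0:ℝ) ≤ 2)
    nlinarith [this]
  have e1 : star a * u * (u * a) = u * (star a * a) * u := by
    rw [hua, ← hua']; noncomm_ring
  have e2 : star g * u * (u * g) = u * (star g * g) * u := by
    rw [hug, ← hug']; noncomm_ring
  have h8A : ((8:ℝ) • (1:A)) = (8:A) := by
    rw [Algebra.smul_def, mul_one, map_ofNat]
  calc ((2 * Real.sqrt 2) • (star a * u)) * star ((2 * Real.sqrt 2) • (star a * u)) +
      ((2 * Real.sqrt 2) • (star g * u)) * star ((2 * Real.sqrt 2) • (star g * u)) +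
      ((1 - 2 * X) * u) * ((1 - 2 * X) * u)
      = (8:ℝ) • (u * (star a * a) * u) + (8:ℝ) • (u * (star g * g) * u)
          + u * ((1 - 2*X) * (1 - 2*X)) * u := by
        simp only [star_smul, star_mul, star_star, star_trivial, hu]
        rw [smul_mul_smul_comm, h8, e1, smul_mul_smul_comm, h8, e2, z2]
    _ = u * ((8:A) * (star a * a) + (8:A) * (star g * g) + (1 - 2*X)*(1-2*X)) * u := by
        rw [← h8A]
        simp only [smul_mul_assoc, one_mul, mul_smul_comm]
        noncomm_ring
    _ = u * ((1 + 2*X) * (1 + 2*X)) * u := by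
        rw [hX]; noncomm_ring
    _ = 1 := by
        rw [show u * ((1+2*X)*(1+2*X)) * u = (u*(1+2*X))*((1+2*X)*u) by noncomm_ring,
          huX, hXu, one_mul]
end

section
/- Let a and b be 2×2 matrices with entries in A, each satisfying the M_q(2) relations, with every entry of a commuting with every entry of b. Define the 4×4 matrix 𝐓 (with entries in A) by 𝐓^{(αα')}_{(ββ')} := a^{αβ} b^{β'α'}, and the 16×16 scalar matrix ℛ by ℛ^{(αα')(ββ')}_{(γγ')(δδ')} := R̂^{αβ}_{γδ} R̂^{α'β'}_{γ'δ'}. Then 𝐓 satisfies the RTT braid relation: Σ ℛ^{(αα')(ββ')}_{(γγ')(δδ')} 𝐓^{(γγ')}_{(εε')} 𝐓^{(δδ')}_{(ζζ')} = Σ 𝐓^{(αα')}_{(γγ')} 𝐓^{(ββ')}_{(δδ')} ℛ^{(γγ')(δδ')}_{(εε')(ζζ')} for all indices (the matrix 𝐓 built from two commuting q-quaternion matrices satisfies the defining relations of the quantum group SO_q(4), realizing SO_q(4) inside SU_q(2) × SU_q(2)'). -/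
open Matrix

variable {R : Type*} [CommRing R] {A : Type*} [Ring A] [Algebra R A]

/-- The q-epsilon tensor: `ε₁₂ = 1`, `ε₂₁ = −q`, `ε₁₁ = ε₂₂ = 0`. -/
def eps (q : R) : Matrix (Fin 2) (Fin 2) R := !![0, 1; -q, 0]

/-- The inverse q-epsilon tensor: `ε¹² = −q⁻¹`, `ε²¹ = 1`, `ε¹¹ = ε²² = 0`. -/
def epsInv (qi : R) : Matrix (Fin 2) (Fin 2) R := !![0, -qi; 1, 0]

/-- The braid matrix entries `R̂^{αβ}_{γδ} = q δ^α_γ δ^β_δ + ε^{αβ} ε_{γδ}`. -/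
def RhatF (q qi : R) (α β γ δ : Fin 2) : R :=
  (if α = γ ∧ β = δ then q else 0) + epsInv qi α β * eps q γ δ

/-- The matrix `𝐓^{(αα')}_{(ββ')} = a^{αβ} b^{β'α'}`. -/
def Tmat (a b : Matrix (Fin 2) (Fin 2) A) (p r : Fin 2 × Fin 2) : A :=
  a p.1 r.1 * b r.2 p.2


section Aux

variable (q qi : R)

private lemma e0000 : RhatF q qi 0 0 0 0 = q := by simp [RhatF, eps, epsInv]
private lemma e0001 : RhatF q qi 0 0 0 1 = 0 := by simp [RhatF, eps, epsInv]
private lemma e0010 : RhatF q qi 0 0 1 0 = 0 := by simp [RhatF, eps, epsInv]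
private lemma e0011 : RhatF q qi 0 0 1 1 = 0 := by simp [RhatF, eps, epsInv]
private lemma e0100 : RhatF q qi 0 1 0 0 = 0 := by simp [RhatF, eps, epsInv]
private lemma e0101 : RhatF q qi 0 1 0 1 = q - qi := by simp [RhatF, eps, epsInv]; ring
private lemma e0110 (hq : q * qi = 1) : RhatF q qi 0 1 1 0 = 1 := by
  simp [RhatF, eps, epsInv]; linear_combination hq
private lemma e0111 : RhatF q qi 0 1 1 1 = 0 := by simp [RhatF, eps, epsInv]
private lemma e1000 : RhatF q qi 1 0 0 0 = 0 := by simp [RhatF, eps, epsInv]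
private lemma e1001 : RhatF q qi 1 0 0 1 = 1 := by simp [RhatF, eps, epsInv]
private lemma e1010 : RhatF q qi 1 0 1 0 = 0 := by simp [RhatF, eps, epsInv]
private lemma e1011 : RhatF q qi 1 0 1 1 = 0 := by simp [RhatF, eps, epsInv]
private lemma e1100 : RhatF q qi 1 1 0 0 = 0 := by simp [RhatF, eps, epsInv]
private lemma e1101 : RhatF q qi 1 1 0 1 = 0 := by simp [RhatF, eps, epsInv]
private lemma e1110 : RhatF q qi 1 1 1 0 = 0 := by simp [RhatF, eps, epsInv]
private lemma e1111 : RhatF q qi 1 1 1 1 = q := by simp [RhatF, eps, epsInv]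

end Aux

/-- The RTT relation for a single `M_q(2)` matrix. -/
private lemma core (q qi : R) (hq : q * qi = 1) (x : Matrix (Fin 2) (Fin 2) A)
    (hx : MqRel q qi x) : ∀ α β ε ζ : Fin 2,
    ∑ γ : Fin 2, ∑ δ : Fin 2, RhatF q qi α β γ δ • (x γ ε * x δ ζ)
    = ∑ γ : Fin 2, ∑ δ : Fin 2, RhatF q qi γ δ ε ζ • (x α γ * x β δ) := by
  obtain ⟨h1,h2,h3,h4,h5,h6⟩ := hx
  have h6' : x 0 0 * x 1 1 = x 1 1 * x 0 0 + (q - qi) • (x 1 0 * x 0 1) := by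
    have h := eq_add_of_sub_eq h6; rw [h5] at h; rw [h, add_comm]
  simp only [Fin.forall_fin_two, Fin.sum_univ_two, e0000, e0001, e0010, e0011, e0100, e0101,
      e0110 q qi hq, e0111, e1000, e1001, e1010, e1011, e1100, e1101, e1110, e1111,
      zero_smul, one_smul, add_zero, zero_add]
  repeat' apply And.intro
  all_goals try simp only [h1, h2, h3, h4, h5, h6']
  all_goals (
    match_scalars <;>
    first
      | ring1
      | linear_combination hq
      | linear_combination (-1 : R) * hq
      | linear_combination q * hq
      | linear_combination (-q) * hq
      | linear_combination qi * hq
      | linear_combination (-qi) * hq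
      | linear_combination (q - qi) * hq
      | linear_combination (qi - q) * hq)

private lemma MqRel_transpose {q qi : R} {b : Matrix (Fin 2) (Fin 2) A}
    (hb : MqRel q qi b) : MqRel q qi bᵀ := by
  obtain ⟨h1,h2,h3,h4,h5,h6⟩ := hb
  refine ⟨?_, ?_, ?_, ?_, ?_, ?_⟩ <;> simp only [Matrix.transpose_apply]
  · exact h2
  · exact h1
  · exact h4
  · exact h3
  · exact h5.symm
  · rw [← h5]; exact h6

private lemma factor_aux (s t : Fin 2 → Fin 2 → R) (f1 f2 g1 g2 : Fin 2 → A)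
    (hc : ∀ i j, g1 i * f2 j = f2 j * g1 i) :
    (∑ γ : Fin 2, ∑ γ' : Fin 2, ∑ δ : Fin 2, ∑ δ' : Fin 2,
      (s γ δ * t γ' δ') • (f1 γ * g1 γ' * (f2 δ * g2 δ')))
    = (∑ γ : Fin 2, ∑ δ : Fin 2, s γ δ • (f1 γ * f2 δ)) *
      (∑ γ' : Fin 2, ∑ δ' : Fin 2, t γ' δ' • (g1 γ' * g2 δ')) := by
  have hkey : ∀ γ γ' δ δ' : Fin 2,
      f1 γ * g1 γ' * (f2 δ * g2 δ') = f1 γ * f2 δ * (g1 γ' * g2 δ') := by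
    intro γ γ' δ δ'
    rw [mul_assoc (f1 γ), ← mul_assoc (g1 γ'), hc, mul_assoc, ← mul_assoc]
  simp only [Fin.sum_univ_two, hkey, add_mul, mul_add, smul_mul_assoc, mul_smul_comm, smul_smul]
  module

/-- the matrix `𝐓` built from two commuting q-quaternion
matrices satisfies the RTT braid relation of `SO_q(4)`. -/
theorem Tmat_RTT (q qi : R) (hq : q * qi = 1)
    (a b : Matrix (Fin 2) (Fin 2) A)
    (ha : MqRel q qi a) (hb : MqRel q qi b)
    (hcomm : ∀ i j k l : Fin 2, a i j * b k l = b k l * a i j) :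
    ∀ α α' β β' ε ε' ζ ζ' : Fin 2,
      (∑ γ : Fin 2, ∑ γ' : Fin 2, ∑ δ : Fin 2, ∑ δ' : Fin 2,
        (RhatF q qi α β γ δ * RhatF q qi α' β' γ' δ') •
          (Tmat a b (γ, γ') (ε, ε') * Tmat a b (δ, δ') (ζ, ζ')))
      = ∑ γ : Fin 2, ∑ γ' : Fin 2, ∑ δ : Fin 2, ∑ δ' : Fin 2,
        (RhatF q qi γ δ ε ζ * RhatF q qi γ' δ' ε' ζ') •
          (Tmat a b (α, α') (γ, γ') * Tmat a b (β, β') (δ, δ')) := by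
  intro α α' β β' ε ε' ζ ζ'
  have hbt := core q qi hq bᵀ (MqRel_transpose hb)
  simp only [Matrix.transpose_apply] at hbt
  simp only [Tmat]
  rw [factor_aux (fun γ δ => RhatF q qi α β γ δ) (fun γ' δ' => RhatF q qi α' β' γ' δ')
        (fun γ => a γ ε) (fun δ => a δ ζ) (fun γ' => b ε' γ') (fun δ' => b ζ' δ')
        (fun i j => (hcomm _ _ _ _).symm),
      factor_aux (fun γ δ => RhatF q qi γ δ ε ζ) (fun γ' δ' => RhatF q qi γ' δ' ε' ζ')
        (fun γ => a α γ) (fun δ => a β δ) (fun γ' => b γ' α') (fun δ' => b δ' β')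
        (fun i j => (hcomm _ _ _ _).symm),
      core q qi hq a ha α β ε ζ, hbt α' β' ε' ζ']
end

section
/- Let ξ = (ξ^{αα'}) be a 2×2 matrix with entries in A satisfying the one-form relations, and set f^{αβ} := Σ_{γ',δ'} ε_{γ'δ'} ξ^{αγ'} ξ^{βδ'} and f'^{α'β'} := Σ_{γ,δ} ε_{γδ} ξ^{γα'} ξ^{δβ'}. Then for all indices: ξ^{αα'} ξ^{ββ'} = −(q+q⁻¹)⁻¹ [ f^{αβ} ε^{α'β'} + ε^{αβ} f'^{α'β'} ] (the decomposition of a product of two one-forms into its selfdual and antiselfdual parts). -/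
open Matrix

variable {R : Type*} [CommRing R] {A : Type*} [Ring A] [Algebra R A]

/-- Entries of the symmetric projector
`(P_s)^{αβ}_{γδ} = δ^α_γ δ^β_δ + (q+q⁻¹)⁻¹ ε^{αβ} ε_{γδ}`
(`c` plays the role of `(q+q⁻¹)⁻¹`). -/
def PsF (q qi c : R) (α β γ δ : Fin 2) : R :=
  (if α = γ ∧ β = δ then 1 else 0) + c * (epsInv qi α β * eps q γ δ)

/-- The one-form relations for a 2×2 matrix `ξ` of differentials. -/
def OneFormRel (q qi c : R) (ξ : Matrix (Fin 2) (Fin 2) A) : Prop :=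
  (∀ α β α' β' : Fin 2,
    ∑ γ : Fin 2, ∑ δ : Fin 2, ∑ γ' : Fin 2, ∑ δ' : Fin 2,
      (PsF q qi c α β γ δ * PsF q qi c α' β' γ' δ') • (ξ γ γ' * ξ δ δ') = 0) ∧
  (∑ γ : Fin 2, ∑ δ : Fin 2, ∑ γ' : Fin 2, ∑ δ' : Fin 2,
      (eps q γ δ * eps q γ' δ') • (ξ γ γ' * ξ δ δ') = 0)

/-- The selfdual 2-form components `f^{αβ} = Σ ε_{γ'δ'} ξ^{αγ'} ξ^{βδ'}`. -/
def fSD (q : R) (ξ : Matrix (Fin 2) (Fin 2) A) (α β : Fin 2) : A :=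
  ∑ γ' : Fin 2, ∑ δ' : Fin 2, eps q γ' δ' • (ξ α γ' * ξ β δ')

/-- The antiselfdual 2-form components `f'^{α'β'} = Σ ε_{γδ} ξ^{γα'} ξ^{δβ'}`. -/
def fASD (q : R) (ξ : Matrix (Fin 2) (Fin 2) A) (α' β' : Fin 2) : A :=
  ∑ γ : Fin 2, ∑ δ : Fin 2, eps q γ δ • (ξ γ α' * ξ δ β')

set_option maxHeartbeats 4000000 in
/-- decomposition of a product of two one-forms into its
selfdual and antiselfdual parts:
`ξ^{αα'} ξ^{ββ'} = −(q+q⁻¹)⁻¹ [f^{αβ} ε^{α'β'} + ε^{αβ} f'^{α'β'}]`. -/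
theorem oneform_product_decomposition (q qi c : R) (hq : q * qi = 1)
    (hc : c * (q + qi) = 1)
    (ξ : Matrix (Fin 2) (Fin 2) A) (hξ : OneFormRel q qi c ξ) :
    ∀ α α' β β' : Fin 2,
      ξ α α' * ξ β β'
        = -(c • (epsInv qi α' β' • fSD q ξ α β + epsInv qi α β • fASD q ξ α' β')) := by
  obtain ⟨h1, h2⟩ := hξ
  intro α α' β β'
  have h1' := h1 α β α' β'
  have key : ξ α α' * ξ β β'
      + c • (epsInv qi α' β' • fSD q ξ α β + epsInv qi α β • fASD q ξ α' β')
      = (∑ γ : Fin 2, ∑ δ : Fin 2, ∑ γ' : Fin 2, ∑ δ' : Fin 2,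
          (PsF q qi c α β γ δ * PsF q qi c α' β' γ' δ') • (ξ γ γ' * ξ δ δ'))
        - (c * epsInv qi α β * (c * epsInv qi α' β')) •
          (∑ γ : Fin 2, ∑ δ : Fin 2, ∑ γ' : Fin 2, ∑ δ' : Fin 2,
            (eps q γ δ * eps q γ' δ') • (ξ γ γ' * ξ δ δ')) := by
    fin_cases α <;> fin_cases β <;> fin_cases α' <;> fin_cases β' <;>
      simp [PsF, eps, epsInv, fSD, fASD, Fin.sum_univ_two, Fin.ext_iff] <;>
      module
  rw [h1', h2] at key
  simp only [smul_zero, sub_zero] at key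
  exact eq_neg_of_add_eq_zero_left key
end

section
/- Let x = (x^{αα'}) and ξ = (ξ^{αα'}) be 2×2 matrices with entries in A such that ξ satisfies the one-form relations and x and ξ satisfy the braiding relation x^{αα'} ξ^{ββ'} = Σ R̂^{αβ}_{γδ} R̂^{α'β'}_{γ'δ'} ξ^{γγ'} x^{δδ'}. Set f^{βγ} := Σ_{γ',δ'} ε_{γ'δ'} ξ^{βγ'} ξ^{γδ'}. Then for all indices α, α', β, γ: x^{αα'} f^{βγ} = q · Σ_{λ,τ,μ,ν} R̂^{αβ}_{λτ} R̂^{τγ}_{μν} f^{λμ} x^{να'} (the coordinates move past selfdual 2-forms via the operator R̂₁₂R̂₂₃). -/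
open Matrix

variable {R : Type*} [CommRing R] {A : Type*} [Ring A] [Algebra R A]

set_option maxHeartbeats 4000000 in
/-- the coordinates move past selfdual 2-forms via the operator
`R̂₁₂R̂₂₃`: `x^{αα'} f^{βγ} = q (R̂₁₂R̂₂₃)^{αβγ}_{λμν} f^{λμ} x^{να'}`. -/
theorem coordinates_past_selfdual (q qi c : R) (hq : q * qi = 1)
    (hc : c * (q + qi) = 1)
    (x ξ : Matrix (Fin 2) (Fin 2) A) (hξ : OneFormRel q qi c ξ)
    (hbraid : ∀ α α' β β' : Fin 2,
      x α α' * ξ β β' = ∑ γ : Fin 2, ∑ δ : Fin 2, ∑ γ' : Fin 2, ∑ δ' : Fin 2,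
        (RhatF q qi α β γ δ * RhatF q qi α' β' γ' δ') • (ξ γ γ' * x δ δ')) :
    ∀ α α' β γ : Fin 2,
      x α α' * fSD q ξ β γ
        = q • ∑ lam : Fin 2, ∑ mu : Fin 2, ∑ nu : Fin 2, ∑ tau : Fin 2,
            (RhatF q qi α β lam tau * RhatF q qi tau γ mu nu) •
              (fSD q ξ lam mu * x nu α') := by
  intro α α' β γ
  fin_cases α <;> fin_cases α' <;> fin_cases β <;> fin_cases γ
  · -- case 0 0 0 0
    have E0 := congrArg (· * ξ 0 1) (hbraid 0 0 0 0)
    have E1 := congrArg (· * ξ 0 0) (hbraid 0 0 0 1)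
    have H0 := congrArg (ξ 0 0 * ·) (hbraid 0 0 0 1)
    have H1 := congrArg (ξ 0 0 * ·) (hbraid 0 1 0 0)
    have H2 := congrArg (ξ 0 1 * ·) (hbraid 0 0 0 0)
    simp [RhatF, fSD, eps, epsInv, Fin.sum_univ_two, mul_add, add_mul, smul_add,
      smul_smul, mul_smul_comm, smul_mul_assoc, mul_assoc] at E0 E1 H0 H1 H2 ⊢
    linear_combination (norm := module) ((1)) • E0 +
        ((-q)) • E1 +
        ((q^2)) • H0 +
        ((q^2*qi) + (-q^3)) • H1 +
        ((-q^3*qi)) • H2 +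
        hq • (((q^3)) • (ξ 0 0 * (ξ 0 1 * x 0 0))) +
        hq • (((-q^4)) • (ξ 0 1 * (ξ 0 0 * x 0 0)))
  · -- case 0 0 0 1
    have E0 := congrArg (· * ξ 1 1) (hbraid 0 0 0 0)
    have E1 := congrArg (· * ξ 1 0) (hbraid 0 0 0 1)
    have H0 := congrArg (ξ 0 0 * ·) (hbraid 0 0 1 1)
    have H1 := congrArg (ξ 0 0 * ·) (hbraid 0 1 1 0)
    have H2 := congrArg (ξ 0 1 * ·) (hbraid 0 0 1 0)
    simp [RhatF, fSD, eps, epsInv, Fin.sum_univ_two, mul_add, add_mul, smul_add,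
      smul_smul, mul_smul_comm, smul_mul_assoc, mul_assoc] at E0 E1 H0 H1 H2 ⊢
    linear_combination (norm := module) ((1)) • E0 +
        ((-q)) • E1 +
        ((q^2)) • H0 +
        ((q^2*qi) + (-q^3)) • H1 +
        ((-q^3*qi)) • H2 +
        hq • (((-q^2*qi) + (q^3)) • (ξ 0 0 * (ξ 0 1 * x 1 0))) +
        hq • (((q^3*qi)) • (ξ 0 0 * (ξ 1 1 * x 0 0))) +
        hq • (((q^3*qi) + (-q^4)) • (ξ 0 1 * (ξ 0 0 * x 1 0))) +
        hq • (((-q^4*qi)) • (ξ 0 1 * (ξ 1 0 * x 0 0)))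
  · -- case 0 0 1 0
    have E0 := congrArg (· * ξ 0 1) (hbraid 0 0 1 0)
    have E1 := congrArg (· * ξ 0 0) (hbraid 0 0 1 1)
    have H0 := congrArg (ξ 0 0 * ·) (hbraid 1 0 0 1)
    have H1 := congrArg (ξ 0 0 * ·) (hbraid 1 1 0 0)
    have H2 := congrArg (ξ 0 1 * ·) (hbraid 1 0 0 0)
    have H3 := congrArg (ξ 1 0 * ·) (hbraid 0 0 0 1)
    have H4 := congrArg (ξ 1 0 * ·) (hbraid 0 1 0 0)
    have H5 := congrArg (ξ 1 1 * ·) (hbraid 0 0 0 0)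
    simp [RhatF, fSD, eps, epsInv, Fin.sum_univ_two, mul_add, add_mul, smul_add,
      smul_smul, mul_smul_comm, smul_mul_assoc, mul_assoc] at E0 E1 H0 H1 H2 H3 H4 H5 ⊢
    linear_combination (norm := module) ((1)) • E0 +
        ((-q)) • E1 +
        ((-q*qi) + (q^2)) • H0 +
        ((-q*qi^2) + (2*q^2*qi) + (-q^3)) • H1 +
        ((q^2*qi^2) + (-q^3*qi)) • H2 +
        ((q^2*qi)) • H3 +
        ((q^2*qi^2) + (-q^3*qi)) • H4 +
        ((-q^3*qi^2)) • H5 +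
        hq • (((-q*qi) + (q^2)) • (ξ 0 0 * (ξ 0 1 * x 1 0))) +
        hq • (((q^2*qi) + (-q^3)) • (ξ 0 1 * (ξ 0 0 * x 1 0))) +
        hq • (((q^3*qi)) • (ξ 1 0 * (ξ 0 1 * x 0 0))) +
        hq • (((-q^4*qi)) • (ξ 1 1 * (ξ 0 0 * x 0 0)))
  · -- case 0 0 1 1
    have E0 := congrArg (· * ξ 1 1) (hbraid 0 0 1 0)
    have E1 := congrArg (· * ξ 1 0) (hbraid 0 0 1 1)
    have H0 := congrArg (ξ 0 0 * ·) (hbraid 1 0 1 1)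
    have H1 := congrArg (ξ 0 0 * ·) (hbraid 1 1 1 0)
    have H2 := congrArg (ξ 0 1 * ·) (hbraid 1 0 1 0)
    have H3 := congrArg (ξ 1 0 * ·) (hbraid 0 0 1 1)
    have H4 := congrArg (ξ 1 0 * ·) (hbraid 0 1 1 0)
    have H5 := congrArg (ξ 1 1 * ·) (hbraid 0 0 1 0)
    simp [RhatF, fSD, eps, epsInv, Fin.sum_univ_two, mul_add, add_mul, smul_add,
      smul_smul, mul_smul_comm, smul_mul_assoc, mul_assoc] at E0 E1 H0 H1 H2 H3 H4 H5 ⊢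
    linear_combination (norm := module) ((1)) • E0 +
        ((-q)) • E1 +
        ((-q*qi) + (q^2)) • H0 +
        ((-q*qi^2) + (2*q^2*qi) + (-q^3)) • H1 +
        ((q^2*qi^2) + (-q^3*qi)) • H2 +
        ((q^2*qi)) • H3 +
        ((q^2*qi^2) + (-q^3*qi)) • H4 +
        ((-q^3*qi^2)) • H5 +
        hq • (((-q^2*qi) + (q^3)) • (ξ 0 0 * (ξ 1 1 * x 1 0))) +
        hq • (((q^3*qi) + (-q^4)) • (ξ 0 1 * (ξ 1 0 * x 1 0))) +
        hq • (((-q^2*qi^2) + (q^3*qi)) • (ξ 1 0 * (ξ 0 1 * x 1 0))) +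
        hq • (((q^3*qi^2)) • (ξ 1 0 * (ξ 1 1 * x 0 0))) +
        hq • (((q^3*qi^2) + (-q^4*qi)) • (ξ 1 1 * (ξ 0 0 * x 1 0))) +
        hq • (((-q^4*qi^2)) • (ξ 1 1 * (ξ 1 0 * x 0 0)))
  · -- case 0 1 0 0
    have E0 := congrArg (· * ξ 0 1) (hbraid 0 1 0 0)
    have E1 := congrArg (· * ξ 0 0) (hbraid 0 1 0 1)
    have H0 := congrArg (ξ 0 0 * ·) (hbraid 0 1 0 1)
    have H1 := congrArg (ξ 0 1 * ·) (hbraid 0 1 0 0)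
    simp [RhatF, fSD, eps, epsInv, Fin.sum_univ_two, mul_add, add_mul, smul_add,
      smul_smul, mul_smul_comm, smul_mul_assoc, mul_assoc] at E0 E1 H0 H1 ⊢
    linear_combination (norm := module) ((1)) • E0 +
        ((-q)) • E1 +
        ((q)) • H0 +
        ((-q^3)) • H1
  · -- case 0 1 0 1
    have E0 := congrArg (· * ξ 1 1) (hbraid 0 1 0 0)
    have E1 := congrArg (· * ξ 1 0) (hbraid 0 1 0 1)
    have H0 := congrArg (ξ 0 0 * ·) (hbraid 0 1 1 1)
    have H1 := congrArg (ξ 0 1 * ·) (hbraid 0 1 1 0)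
    simp [RhatF, fSD, eps, epsInv, Fin.sum_univ_two, mul_add, add_mul, smul_add,
      smul_smul, mul_smul_comm, smul_mul_assoc, mul_assoc] at E0 E1 H0 H1 ⊢
    linear_combination (norm := module) ((1)) • E0 +
        ((-q)) • E1 +
        ((q)) • H0 +
        ((-q^3)) • H1
  · -- case 0 1 1 0
    have E0 := congrArg (· * ξ 0 1) (hbraid 0 1 1 0)
    have E1 := congrArg (· * ξ 0 0) (hbraid 0 1 1 1)
    have H0 := congrArg (ξ 0 0 * ·) (hbraid 1 1 0 1)
    have H1 := congrArg (ξ 0 1 * ·) (hbraid 1 1 0 0)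
    have H2 := congrArg (ξ 1 0 * ·) (hbraid 0 1 0 1)
    have H3 := congrArg (ξ 1 1 * ·) (hbraid 0 1 0 0)
    simp [RhatF, fSD, eps, epsInv, Fin.sum_univ_two, mul_add, add_mul, smul_add,
      smul_smul, mul_smul_comm, smul_mul_assoc, mul_assoc] at E0 E1 H0 H1 H2 H3 ⊢
    linear_combination (norm := module) ((1)) • E0 +
        ((-q)) • E1 +
        ((-qi) + (q)) • H0 +
        ((q^2*qi) + (-q^3)) • H1 +
        ((q*qi)) • H2 +
        ((-q^3*qi)) • H3
  · -- case 0 1 1 1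
    have E0 := congrArg (· * ξ 1 1) (hbraid 0 1 1 0)
    have E1 := congrArg (· * ξ 1 0) (hbraid 0 1 1 1)
    have H0 := congrArg (ξ 0 0 * ·) (hbraid 1 1 1 1)
    have H1 := congrArg (ξ 0 1 * ·) (hbraid 1 1 1 0)
    have H2 := congrArg (ξ 1 0 * ·) (hbraid 0 1 1 1)
    have H3 := congrArg (ξ 1 1 * ·) (hbraid 0 1 1 0)
    simp [RhatF, fSD, eps, epsInv, Fin.sum_univ_two, mul_add, add_mul, smul_add,
      smul_smul, mul_smul_comm, smul_mul_assoc, mul_assoc] at E0 E1 H0 H1 H2 H3 ⊢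
    linear_combination (norm := module) ((1)) • E0 +
        ((-q)) • E1 +
        ((-qi) + (q)) • H0 +
        ((q^2*qi) + (-q^3)) • H1 +
        ((q*qi)) • H2 +
        ((-q^3*qi)) • H3
  · -- case 1 0 0 0
    have E0 := congrArg (· * ξ 0 1) (hbraid 1 0 0 0)
    have E1 := congrArg (· * ξ 0 0) (hbraid 1 0 0 1)
    have H0 := congrArg (ξ 0 0 * ·) (hbraid 1 0 0 1)
    have H1 := congrArg (ξ 0 0 * ·) (hbraid 1 1 0 0)
    have H2 := congrArg (ξ 0 1 * ·) (hbraid 1 0 0 0)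
    simp [RhatF, fSD, eps, epsInv, Fin.sum_univ_two, mul_add, add_mul, smul_add,
      smul_smul, mul_smul_comm, smul_mul_assoc, mul_assoc] at E0 E1 H0 H1 H2 ⊢
    linear_combination (norm := module) ((1)) • E0 +
        ((-q)) • E1 +
        ((q)) • H0 +
        ((q*qi) + (-q^2)) • H1 +
        ((-q^2*qi)) • H2 +
        hq • (((q)) • (ξ 0 0 * (ξ 0 1 * x 1 0))) +
        hq • (((-q^2)) • (ξ 0 1 * (ξ 0 0 * x 1 0)))
  · -- case 1 0 0 1
    have E0 := congrArg (· * ξ 1 1) (hbraid 1 0 0 0)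
    have E1 := congrArg (· * ξ 1 0) (hbraid 1 0 0 1)
    have H0 := congrArg (ξ 0 0 * ·) (hbraid 1 0 1 1)
    have H1 := congrArg (ξ 0 0 * ·) (hbraid 1 1 1 0)
    have H2 := congrArg (ξ 0 1 * ·) (hbraid 1 0 1 0)
    simp [RhatF, fSD, eps, epsInv, Fin.sum_univ_two, mul_add, add_mul, smul_add,
      smul_smul, mul_smul_comm, smul_mul_assoc, mul_assoc] at E0 E1 H0 H1 H2 ⊢
    linear_combination (norm := module) ((1)) • E0 +
        ((-q)) • E1 +
        ((q)) • H0 +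
        ((q*qi) + (-q^2)) • H1 +
        ((-q^2*qi)) • H2 +
        hq • (((q^2)) • (ξ 0 0 * (ξ 1 1 * x 1 0))) +
        hq • (((-q^3)) • (ξ 0 1 * (ξ 1 0 * x 1 0)))
  · -- case 1 0 1 0
    have E0 := congrArg (· * ξ 0 1) (hbraid 1 0 1 0)
    have E1 := congrArg (· * ξ 0 0) (hbraid 1 0 1 1)
    have H0 := congrArg (ξ 1 0 * ·) (hbraid 1 0 0 1)
    have H1 := congrArg (ξ 1 0 * ·) (hbraid 1 1 0 0)
    have H2 := congrArg (ξ 1 1 * ·) (hbraid 1 0 0 0)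
    simp [RhatF, fSD, eps, epsInv, Fin.sum_univ_two, mul_add, add_mul, smul_add,
      smul_smul, mul_smul_comm, smul_mul_assoc, mul_assoc] at E0 E1 H0 H1 H2 ⊢
    linear_combination (norm := module) ((1)) • E0 +
        ((-q)) • E1 +
        ((q^2)) • H0 +
        ((q^2*qi) + (-q^3)) • H1 +
        ((-q^3*qi)) • H2 +
        hq • (((q^2)) • (ξ 1 0 * (ξ 0 1 * x 1 0))) +
        hq • (((-q^3)) • (ξ 1 1 * (ξ 0 0 * x 1 0)))
  · -- case 1 0 1 1
    have E0 := congrArg (· * ξ 1 1) (hbraid 1 0 1 0)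
    have E1 := congrArg (· * ξ 1 0) (hbraid 1 0 1 1)
    have H0 := congrArg (ξ 1 0 * ·) (hbraid 1 0 1 1)
    have H1 := congrArg (ξ 1 0 * ·) (hbraid 1 1 1 0)
    have H2 := congrArg (ξ 1 1 * ·) (hbraid 1 0 1 0)
    simp [RhatF, fSD, eps, epsInv, Fin.sum_univ_two, mul_add, add_mul, smul_add,
      smul_smul, mul_smul_comm, smul_mul_assoc, mul_assoc] at E0 E1 H0 H1 H2 ⊢
    linear_combination (norm := module) ((1)) • E0 +
        ((-q)) • E1 +
        ((q^2)) • H0 +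
        ((q^2*qi) + (-q^3)) • H1 +
        ((-q^3*qi)) • H2 +
        hq • (((q^3)) • (ξ 1 0 * (ξ 1 1 * x 1 0))) +
        hq • (((-q^4)) • (ξ 1 1 * (ξ 1 0 * x 1 0)))
  · -- case 1 1 0 0
    have E0 := congrArg (· * ξ 0 1) (hbraid 1 1 0 0)
    have E1 := congrArg (· * ξ 0 0) (hbraid 1 1 0 1)
    have H0 := congrArg (ξ 0 0 * ·) (hbraid 1 1 0 1)
    have H1 := congrArg (ξ 0 1 * ·) (hbraid 1 1 0 0)
    simp [RhatF, fSD, eps, epsInv, Fin.sum_univ_two, mul_add, add_mul, smul_add,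
      smul_smul, mul_smul_comm, smul_mul_assoc, mul_assoc] at E0 E1 H0 H1 ⊢
    linear_combination (norm := module) ((1)) • E0 +
        ((-q)) • E1 +
        ((1)) • H0 +
        ((-q^2)) • H1
  · -- case 1 1 0 1
    have E0 := congrArg (· * ξ 1 1) (hbraid 1 1 0 0)
    have E1 := congrArg (· * ξ 1 0) (hbraid 1 1 0 1)
    have H0 := congrArg (ξ 0 0 * ·) (hbraid 1 1 1 1)
    have H1 := congrArg (ξ 0 1 * ·) (hbraid 1 1 1 0)
    simp [RhatF, fSD, eps, epsInv, Fin.sum_univ_two, mul_add, add_mul, smul_add,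
      smul_smul, mul_smul_comm, smul_mul_assoc, mul_assoc] at E0 E1 H0 H1 ⊢
    linear_combination (norm := module) ((1)) • E0 +
        ((-q)) • E1 +
        ((1)) • H0 +
        ((-q^2)) • H1
  · -- case 1 1 1 0
    have E0 := congrArg (· * ξ 0 1) (hbraid 1 1 1 0)
    have E1 := congrArg (· * ξ 0 0) (hbraid 1 1 1 1)
    have H0 := congrArg (ξ 1 0 * ·) (hbraid 1 1 0 1)
    have H1 := congrArg (ξ 1 1 * ·) (hbraid 1 1 0 0)
    simp [RhatF, fSD, eps, epsInv, Fin.sum_univ_two, mul_add, add_mul, smul_add,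
      smul_smul, mul_smul_comm, smul_mul_assoc, mul_assoc] at E0 E1 H0 H1 ⊢
    linear_combination (norm := module) ((1)) • E0 +
        ((-q)) • E1 +
        ((q)) • H0 +
        ((-q^3)) • H1
  · -- case 1 1 1 1
    have E0 := congrArg (· * ξ 1 1) (hbraid 1 1 1 0)
    have E1 := congrArg (· * ξ 1 0) (hbraid 1 1 1 1)
    have H0 := congrArg (ξ 1 0 * ·) (hbraid 1 1 1 1)
    have H1 := congrArg (ξ 1 1 * ·) (hbraid 1 1 1 0)
    simp [RhatF, fSD, eps, epsInv, Fin.sum_univ_two, mul_add, add_mul, smul_add,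
      smul_smul, mul_smul_comm, smul_mul_assoc, mul_assoc] at E0 E1 H0 H1 ⊢
    linear_combination (norm := module) ((1)) • E0 +
        ((-q)) • E1 +
        ((q)) • H0 +
        ((-q^3)) • H1
end

section
/- If a 2×2 matrix x with entries in A satisfies the M_q(2) relations, then xᵀ ε x = det_q(x) · ε and x ε xᵀ = det_q(x) · ε, i.e. entrywise Σ_{α,β} x^{αγ} ε_{αβ} x^{βδ} = det_q(x) ε_{γδ} and Σ_{α,β} x^{γα} ε_{αβ} x^{δβ} = det_q(x) ε_{γδ} for all γ, δ (the q-epsilon tensor is the completely q-antisymmetric invariant tensor of M_q(2)). -/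
open Matrix

variable {R : Type*} [CommRing R] {A : Type*} [Ring A] [Algebra R A]

set_option maxHeartbeats 1000000 in
/-- the q-epsilon tensor is the completely q-antisymmetric
invariant tensor of `M_q(2)`: `xᵀ ε x = det_q(x) ε` and `x ε xᵀ = det_q(x) ε`. -/
theorem eps_invariant (q qi : R) (hq : q * qi = 1)
    (x : Matrix (Fin 2) (Fin 2) A) (hx : MqRel q qi x) :
    ∀ γ δ : Fin 2,
      (∑ α : Fin 2, ∑ β : Fin 2, eps q α β • (x α γ * x β δ))
          = eps q γ δ • qdet q x ∧
      (∑ α : Fin 2, ∑ β : Fin 2, eps q α β • (x γ α * x δ β))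
          = eps q γ δ • qdet q x := by
  obtain ⟨h1, h2, h3, h4, h5, h6⟩ := hx
  have h6' : x 0 0 * x 1 1 = x 1 1 * x 0 0 + (q - qi) • (x 0 1 * x 1 0) := by
    rw [← h6]; abel
  intro γ δ
  fin_cases γ <;> fin_cases δ <;> constructor
  all_goals simp [Fin.sum_univ_two, eps, qdet]
  all_goals first
    | (rw [h1]; module)
    | (rw [h2]; module)
    | (rw [h3]; module)
    | (rw [h4]; module)
    | (rw [← h5, h6']; match_scalars <;> (first | ring1 | linear_combination hq | linear_combination -hq))
    | (rw [← h5]; module)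
    | (rw [h6']; match_scalars <;> (first | ring1 | linear_combination hq | linear_combination -hq))
    | module
end

section
/- Let a and b be 2×2 matrices with entries in A, each satisfying the M_q(2) relations, with every entry of a commuting with every entry of b. Define the 4×4 matrix 𝐓 by 𝐓^{(αα')}_{(ββ')} := a^{αβ} b^{β'α'}. Then Σ_{α,β,α',β'} ε_{αβ} ε_{α'β'} 𝐓^{(αα')}_{(γγ')} 𝐓^{(ββ')}_{(δδ')} = det_q(a) det_q(b) · ε_{γδ} ε_{γ'δ'} for all γ, δ, γ', δ'; in particular, if det_q(a)·det_q(b) = 1, the matrix 𝐓 preserves the q-deformed metric g built from the q-epsilon tensors (the defining metric condition of the compact quantum group SO_q(4)). -/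
open Matrix

variable {R : Type*} [CommRing R] {A : Type*} [Ring A] [Algebra R A]

lemma key_smul {R : Type*} [CommRing R] {A : Type*} [Ring A] [Algebra R A]
    (q qi : R) (hq : q * qi = 1) (a : Matrix (Fin 2) (Fin 2) A)
    (h6 : a 0 0 * a 1 1 - a 1 1 * a 0 0 = (q - qi) • (a 0 1 * a 1 0)) :
    q • (a 0 0 * a 1 1) - q • (a 1 1 * a 0 0) = (q * q - 1) • (a 0 1 * a 1 0) := by
  have : q • (a 0 0 * a 1 1 - a 1 1 * a 0 0) = (q * (q - qi)) • (a 0 1 * a 1 0) := by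
    rw [h6, smul_smul]
  rw [smul_sub] at this
  rw [this, mul_sub, hq]

lemma eps_left {R : Type*} [CommRing R] {A : Type*} [Ring A] [Algebra R A]
    (q qi : R) (hq : q * qi = 1) (a : Matrix (Fin 2) (Fin 2) A)
    (ha : MqRel q qi a) :
    ∀ γ δ : Fin 2, (∑ α : Fin 2, ∑ β : Fin 2, eps q α β • (a α γ * a β δ))
      = eps q γ δ • qdet q a := by
  obtain ⟨h1, h2, h3, h4, h5, h6⟩ := ha
  have hm := key_smul q qi hq a h6
  simp only [Fin.forall_fin_two, Fin.sum_univ_two, eps, qdet,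
    Matrix.cons_val', Matrix.cons_val_zero, Matrix.cons_val_one, Matrix.head_cons,
    Matrix.empty_val', Matrix.cons_val_fin_one, Matrix.of_apply,
    Matrix.head_fin_const, Matrix.vecHead, neg_smul, smul_neg,
    zero_smul, one_smul, zero_add, add_zero, smul_zero]
  refine ⟨⟨?_, ?_⟩, ?_, ?_⟩
  · rw [h2]; abel
  · rw [h5]; abel
  · linear_combination (norm := module) hm
  · rw [h3]; abel

lemma eps_right {R : Type*} [CommRing R] {A : Type*} [Ring A] [Algebra R A]
    (q qi : R) (hq : q * qi = 1) (b : Matrix (Fin 2) (Fin 2) A)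
    (hb : MqRel q qi b) :
    ∀ γ δ : Fin 2, (∑ α : Fin 2, ∑ β : Fin 2, eps q α β • (b γ α * b δ β))
      = eps q γ δ • qdet q b := by
  obtain ⟨h1, h2, h3, h4, h5, h6⟩ := hb
  have hm := key_smul q qi hq b h6
  simp only [Fin.forall_fin_two, Fin.sum_univ_two, eps, qdet,
    Matrix.cons_val', Matrix.cons_val_zero, Matrix.cons_val_one, Matrix.head_cons,
    Matrix.empty_val', Matrix.cons_val_fin_one, Matrix.of_apply,
    Matrix.head_fin_const, Matrix.vecHead, neg_smul, smul_neg,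
    zero_smul, one_smul, zero_add, add_zero, smul_zero]
  refine ⟨⟨?_, ?_⟩, ?_, ?_⟩
  · rw [h1]; abel
  · abel
  · rw [h5] at hm ⊢; linear_combination (norm := module) hm
  · rw [h4]; abel

/-- the matrix `𝐓` built from two commuting q-quaternion
matrices preserves the q-deformed metric built from the q-epsilon tensors,
up to the factor `det_q(a) det_q(b)`:
`Σ ε_{αβ} ε_{α'β'} 𝐓^{(αα')}_{(γγ')} 𝐓^{(ββ')}_{(δδ')}
  = det_q(a) det_q(b) ε_{γδ} ε_{γ'δ'}`. -/
theorem Tmat_metric (q qi : R) (hq : q * qi = 1)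
    (a b : Matrix (Fin 2) (Fin 2) A)
    (ha : MqRel q qi a) (hb : MqRel q qi b)
    (hcomm : ∀ i j k l : Fin 2, a i j * b k l = b k l * a i j) :
    ∀ γ δ γ' δ' : Fin 2,
      (∑ α : Fin 2, ∑ β : Fin 2, ∑ α' : Fin 2, ∑ β' : Fin 2,
        (eps q α β * eps q α' β') •
          (Tmat a b (α, α') (γ, γ') * Tmat a b (β, β') (δ, δ')))
      = (eps q γ δ * eps q γ' δ') • (qdet q a * qdet q b) := by
  intro γ δ γ' δ'
  have hterm : ∀ α β α' β' : Fin 2,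
      (eps q α β * eps q α' β') •
        (Tmat a b (α, α') (γ, γ') * Tmat a b (β, β') (δ, δ'))
      = (eps q α β • (a α γ * a β δ)) * (eps q α' β' • (b γ' α' * b δ' β')) := by
    intro α β α' β'
    rw [smul_mul_smul_comm]
    congr 1
    show a α γ * b γ' α' * (a β δ * b δ' β') = _
    rw [mul_assoc, ← mul_assoc (b γ' α'), ← hcomm, mul_assoc, ← mul_assoc, ← mul_assoc]
  calc (∑ α : Fin 2, ∑ β : Fin 2, ∑ α' : Fin 2, ∑ β' : Fin 2,
        (eps q α β * eps q α' β') •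
          (Tmat a b (α, α') (γ, γ') * Tmat a b (β, β') (δ, δ')))
      = (∑ α : Fin 2, ∑ β : Fin 2, eps q α β • (a α γ * a β δ)) *
        (∑ α' : Fin 2, ∑ β' : Fin 2, eps q α' β' • (b γ' α' * b δ' β')) := by
        rw [Finset.sum_mul]
        refine Finset.sum_congr rfl fun α _ => ?_
        rw [Finset.sum_mul]
        refine Finset.sum_congr rfl fun β _ => ?_
        rw [Finset.mul_sum]
        refine Finset.sum_congr rfl fun α' _ => ?_
        rw [Finset.mul_sum]
        refine Finset.sum_congr rfl fun β' _ => ?_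
        exact hterm α β α' β'
    _ = (eps q γ δ • qdet q a) * (eps q γ' δ' • qdet q b) := by
        rw [eps_left q qi hq a ha, eps_right q qi hq b hb]
    _ = (eps q γ δ * eps q γ' δ') • (qdet q a * qdet q b) := smul_mul_smul_comm _ _ _ _
end
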